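/- In a many-to-one matching market with strict preferences, the set of matched users and the number of filled positions at each BS are the same in every stable matching (the 'rural hospitals' theorem). -/

import Mathlib

open scoped Classical

/-- A many-to-one matching market: quotas, users' strict preference lists
(acceptable BSs in decreasing order of preference), and BSs' strict rankings
of users (lower rank = more preferred). -/
structure Market (M L : Type*) where
  quota : L → ℕ
  uPref : M → List L
  bRank : L → M → ℕ

namespace Market

variable {M L : Type*} [Fintype M] [Fintype L]

/-- User `m` strictly prefers BS `l` to BS `l'`. -/
noncomputable def uPrefers (mk : Market M L) (m : M) (l l' : L) : Prop :=
  l ∈ mk.uPref m ∧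
    (mk.uPref m).findIdx (fun x => decide (x = l)) <
      (mk.uPref m).findIdx (fun x => decide (x = l'))

/-- Keep the (up to) `q` best-ranked members of `s`. -/
noncomputable def topQ (q : ℕ) (rank : M → ℕ) (s : Finset M) : Finset M :=
  s.filter (fun m => (s.filter (fun m' => rank m' < rank m)).card < q)

/-- State of the deferred acceptance algorithm: for each user, the set of BSs
it has already proposed to, and for each BS, the set of users it tentatively holds. -/
structure DAState (M L : Type*) where
  proposed : M → Finset L
  hold : L → Finset M

/-- The most preferred BS that user `m` has not yet proposed to. -/
noncomputable def nextProposal (mk : Market M L) (s : DAState M L) (m : M) : Option L :=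
  (mk.uPref m).find? (fun l => decide (l ∉ s.proposed m))

/-- A user is (tentatively) matched if some BS holds it. -/
def matched (s : DAState M L) (m : M) : Prop := ∃ l, m ∈ s.hold l

/-- Users proposing to BS `l` in the current round. -/
noncomputable def proposalsTo (mk : Market M L) (s : DAState M L) (l : L) : Finset M :=
  Finset.univ.filter (fun m => ¬ matched s m ∧ nextProposal mk s m = some l)

/-- One round of user-proposing deferred acceptance: every unmatched user proposes
to its most preferred BS not yet proposed to; every BS keeps the best applicants
up to its quota (among current holds and new proposers) and rejects the rest. -/
noncomputable def step (mk : Market M L) (s : DAState M L) : DAState M L where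
  proposed := fun m =>
    if matched s m then s.proposed m
    else
      match nextProposal mk s m with
      | some l => insert l (s.proposed m)
      | none => s.proposed m
  hold := fun l => topQ (mk.quota l) (mk.bRank l) (s.hold l ∪ proposalsTo mk s l)

/-- The run of the deferred acceptance algorithm from the empty initial state. -/
noncomputable def run (mk : Market M L) : ℕ → DAState M L
  | 0 => ⟨fun _ => ∅, fun _ => ∅⟩
  | n + 1 => step mk (run mk n)

/-- `μ` is a feasible many-to-one matching: quotas respected, each user assigned
to at most one BS. -/
def IsMatching (mk : Market M L) (μ : L → Finset M) : Prop :=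
  (∀ l, (μ l).card ≤ mk.quota l) ∧ ∀ m l l', m ∈ μ l → m ∈ μ l' → l = l'

/-- Individual rationality: every user is assigned only to an acceptable BS. -/
def IndivRational (mk : Market M L) (μ : L → Finset M) : Prop :=
  ∀ l m, m ∈ μ l → l ∈ mk.uPref m

/-- `(m, l)` is a blocking pair for `μ`: `l` is acceptable to `m`, `m` is not
assigned to `l` and strictly prefers `l` to its assignment (if any), and `l`
either has a free slot or strictly prefers `m` to one of its assigned users. -/
def Blocks (mk : Market M L) (μ : L → Finset M) (m : M) (l : L) : Prop :=
  l ∈ mk.uPref m ∧ m ∉ μ l ∧ (∀ l', m ∈ μ l' → mk.uPrefers m l l') ∧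
    ((μ l).card < mk.quota l ∨ ∃ m' ∈ μ l, mk.bRank l m < mk.bRank l m')

/-- Stability: feasible, individually rational, and no blocking pair. -/
def IsStable (mk : Market M L) (μ : L → Finset M) : Prop :=
  IsMatching mk μ ∧ IndivRational mk μ ∧ ∀ m l, ¬ Blocks mk μ m l

end Market

/-! Run user-proposing deferred acceptance until no unmatched user has a BS left to propose to,
and compare its final state `s` with any stable matching `ν`. By induction over the rounds, no
user is ever rejected by its `ν`-partner. Hence every user matched in `ν` is held in `s`, and no
BS holds more users in `s` than in `ν`: a surplus user would block `ν` at a BS with a free slot.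
Since the `ν l` are disjoint, counting turns both inequalities into equalities, so every stable
matching fills the same number of positions and matches the same users as `s`. -/

namespace List

variable {α : Type*} {xs : List α} {a b : α}

theorem getElem_findIdx_eq (ha : a ∈ xs) :
    ∃ h, xs[xs.findIdx (fun x => decide (x = a))]'h = a := by
  have h := findIdx_lt_length_of_exists (p := fun x => decide (x = a)) ⟨a, ha, by simp⟩
  exact ⟨h, by simpa using findIdx_getElem (w := h)⟩

theorem eq_of_findIdx_eq (ha : a ∈ xs)
    (h : xs.findIdx (fun x => decide (x = a)) = xs.findIdx (fun x => decide (x = b))) :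
    a = b := by
  obtain ⟨ha', hxa⟩ := getElem_findIdx_eq ha
  have hb : xs.findIdx (fun x => decide (x = b)) < xs.length := h ▸ ha'
  simpa [← h, hxa] using findIdx_getElem (w := hb)

theorem findIdx_eq_le_findIdx_of_find?_eq_some {p : α → Bool} (hb : xs.find? p = some b) :
    xs.findIdx (fun x => decide (x = b)) ≤ xs.findIdx p := by
  by_contra! hlt
  have hp : xs.findIdx p < xs.length := by
    rw [find?_eq_getElem?_findIdx] at hb
    exact (getElem?_eq_some_iff.mp hb).1
  rw [find?_eq_getElem?_findIdx, getElem?_eq_getElem hp] at hb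
  simpa [Option.some_inj.mp hb] using not_of_lt_findIdx hlt

theorem not_of_findIdx_lt_of_find?_eq_some {p : α → Bool} (hb : xs.find? p = some b)
    (ha : a ∈ xs)
    (hlt : xs.findIdx (fun x => decide (x = a)) < xs.findIdx (fun x => decide (x = b))) :
    p a = false := by
  obtain ⟨_, hxa⟩ := getElem_findIdx_eq ha
  rw [← hxa]
  exact not_of_lt_findIdx (hlt.trans_le (findIdx_eq_le_findIdx_of_find?_eq_some hb))

end List

open Finset

theorem Finset.card_eq_and_biUnion_eq_of_biUnion_subset {ι α : Type*} [DecidableEq α]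
    {s : Finset ι} {A B : ι → Finset α} (hB : (s : Set ι).PairwiseDisjoint B)
    (hle : ∀ i ∈ s, #(A i) ≤ #(B i)) (hsub : s.biUnion B ⊆ s.biUnion A) :
    (∀ i ∈ s, #(A i) = #(B i)) ∧ s.biUnion A = s.biUnion B := by
  have hsum : ∑ i ∈ s, #(A i) = ∑ i ∈ s, #(B i) :=
    le_antisymm (sum_le_sum hle) <| calc
      ∑ i ∈ s, #(B i) = #(s.biUnion B) := (card_biUnion hB).symm
      _ ≤ #(s.biUnion A) := card_le_card hsub
      _ ≤ ∑ i ∈ s, #(A i) := card_biUnion_le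
  refine ⟨(sum_eq_sum_iff_of_le hle).mp hsum, (eq_of_subset_of_card_le hsub ?_).symm⟩
  rw [card_biUnion hB, ← hsum]
  exact card_biUnion_le

namespace Market

theorem card_topQ_le {M : Type*} {q : ℕ} {r : M → ℕ} (hr : Function.Injective r)
    (s : Finset M) : #(topQ q r s) ≤ q := by
  let better : M → ℕ := fun m => #(s.filter (fun m' => r m' < r m))
  have better_strictMono : ∀ a ∈ s, ∀ b, r a < r b → better a < better b := by
    intro a ha b hab
    refine card_lt_card ((ssubset_iff_of_subset ?_).mpr ⟨a, ?_, ?_⟩)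
    · exact monotone_filter_right _ fun x _ hx => hx.trans hab
    · exact mem_filter.mpr ⟨ha, hab⟩
    · simp
  calc #(topQ q r s) ≤ #(range q) := by
        refine card_le_card_of_injOn better (fun m hm => mem_range.mpr (mem_filter.mp hm).2) ?_
        intro a ha b hb hab
        by_contra hne
        rcases lt_or_gt_of_ne (hr.ne hne) with h | h
        · exact (better_strictMono a (mem_filter.mp ha).1 b h).ne hab
        · exact (better_strictMono b (mem_filter.mp hb).1 a h).ne' hab
    _ = q := card_range q

theorem exists_better_notMem_of_notMem_topQ {M : Type*} {q : ℕ} {r : M → ℕ}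
    {s t : Finset M} {m : M} (hms : m ∈ s) (hm : m ∉ topQ q r s) (hmt : m ∈ t)
    (ht : #t ≤ q) : ∃ y ∈ s, r y < r m ∧ y ∉ t := by
  by_contra! h
  have hsub : s.filter (fun y => r y < r m) ⊆ t.erase m := fun y hy => by
    obtain ⟨hys, hy⟩ := mem_filter.mp hy
    exact mem_erase.mpr ⟨fun hym => (hym ▸ hy).false, h y hys hy⟩
  have hcard : #(s.filter (fun y => r y < r m)) < q :=
    calc _ ≤ #(t.erase m) := card_le_card hsub
      _ < #t := card_erase_lt_of_mem hmt
      _ ≤ q := ht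
  exact hm (mem_filter.mpr ⟨hms, hcard⟩)

variable {M L : Type*} {mk : Market M L} {m : M} {l l' : L}

theorem uPrefers_or_uPrefers (hl : l ∈ mk.uPref m) (hl' : l' ∈ mk.uPref m) (hne : l ≠ l') :
    mk.uPrefers m l l' ∨ mk.uPrefers m l' l := by
  rcases lt_trichotomy ((mk.uPref m).findIdx (fun x => decide (x = l)))
      ((mk.uPref m).findIdx (fun x => decide (x = l'))) with h | h | h
  · exact .inl ⟨hl, h⟩
  · exact absurd (List.eq_of_findIdx_eq hl h) hne
  · exact .inr ⟨hl', h⟩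

section Proposals

variable {s : DAState M L}

theorem mem_uPref_of_nextProposal_eq_some (h : nextProposal mk s m = some l) :
    l ∈ mk.uPref m :=
  List.mem_of_find?_eq_some h

theorem notMem_proposed_of_nextProposal_eq_some (h : nextProposal mk s m = some l) :
    l ∉ s.proposed m := by
  simpa using List.find?_some h

theorem mem_proposed_of_nextProposal_eq_some (h : nextProposal mk s m = some l)
    (hpref : mk.uPrefers m l' l) : l' ∈ s.proposed m := by
  simpa using List.not_of_findIdx_lt_of_find?_eq_some h hpref.1 hpref.2

theorem mem_proposed_of_nextProposal_eq_none (h : nextProposal mk s m = none)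
    (hl : l ∈ mk.uPref m) : l ∈ s.proposed m := by
  simpa using List.find?_eq_none.mp h l hl

variable [Fintype M]

theorem mem_proposalsTo :
    m ∈ proposalsTo mk s l ↔ ¬ matched s m ∧ nextProposal mk s m = some l := by
  simp [proposalsTo]

theorem step_proposed_of_nextProposal_eq_some (hm : ¬ matched s m)
    (h : nextProposal mk s m = some l) :
    (step mk s).proposed m = insert l (s.proposed m) := by
  simp [step, hm, h]

theorem mem_step_proposed :
    l ∈ (step mk s).proposed m ↔ l ∈ s.proposed m ∨ m ∈ proposalsTo mk s l := by
  rw [mem_proposalsTo]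
  by_cases hm : matched s m
  · simp [step, hm]
  · cases h : nextProposal mk s m with
    | none => simp [step, hm, h]
    | some l'' => simp [step_proposed_of_nextProposal_eq_some hm h, hm, or_comm, eq_comm]

theorem proposed_subset_step_proposed : s.proposed m ⊆ (step mk s).proposed m :=
  fun _ hl => mem_step_proposed.mpr (.inl hl)

noncomputable def applicants (mk : Market M L) (s : DAState M L) (l : L) : Finset M :=
  s.hold l ∪ proposalsTo mk s l

theorem mem_applicants :
    m ∈ applicants mk s l ↔
      m ∈ s.hold l ∨ (¬ matched s m ∧ nextProposal mk s m = some l) := by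
  rw [applicants, mem_union, mem_proposalsTo]

theorem step_hold : (step mk s).hold l = topQ (mk.quota l) (mk.bRank l) (applicants mk s l) :=
  rfl

theorem mem_applicants_of_mem_step_hold (h : m ∈ (step mk s).hold l) :
    m ∈ applicants mk s l := by
  rw [step_hold] at h
  exact filter_subset _ _ h

end Proposals

structure IsValidState (mk : Market M L) (s : DAState M L) : Prop where
  card_hold_le : ∀ l, #(s.hold l) ≤ mk.quota l
  mem_proposed_of_mem_hold : ∀ {l m}, m ∈ s.hold l → l ∈ s.proposed m
  mem_uPref_of_mem_proposed : ∀ {m l}, l ∈ s.proposed m → l ∈ mk.uPref m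
  eq_of_mem_hold : ∀ {m l l'}, m ∈ s.hold l → m ∈ s.hold l' → l = l'
  mem_proposed_of_uPrefers :
    ∀ {m l l'}, mk.uPrefers m l l' → l' ∈ s.proposed m → l ∈ s.proposed m

/-- The invariant of deferred acceptance that drives the proof: no user is ever rejected by its
partner in the stable matching `ν`. -/
def HoldsPartners (ν : L → Finset M) (s : DAState M L) : Prop :=
  ∀ {m l}, m ∈ ν l → l ∈ s.proposed m → m ∈ s.hold l

def IsTerminal (mk : Market M L) (s : DAState M L) : Prop :=
  ∀ m, ¬ matched s m → nextProposal mk s m = none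

variable {s : DAState M L} {ν : L → Finset M}

theorem matched_of_mem (hIR : IndivRational mk ν) (hp : HoldsPartners ν s)
    (hterm : IsTerminal mk s) (hm : m ∈ ν l) : matched s m := by
  by_contra hunmatched
  exact hunmatched ⟨l, hp hm (mem_proposed_of_nextProposal_eq_none (hterm m hunmatched)
    (hIR l m hm))⟩

variable [Fintype M]

namespace IsValidState

theorem mem_step_proposed_of_mem_applicants (hs : IsValidState mk s)
    (h : m ∈ applicants mk s l) : l ∈ (step mk s).proposed m := by
  rcases mem_applicants.mp h with hold | propose
  · exact proposed_subset_step_proposed (hs.mem_proposed_of_mem_hold hold)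
  · exact mem_step_proposed.mpr (.inr (mem_proposalsTo.mpr propose))

theorem mem_uPref_of_mem_applicants (hs : IsValidState mk s) (h : m ∈ applicants mk s l) :
    l ∈ mk.uPref m := by
  rcases mem_applicants.mp h with hold | ⟨-, hnext⟩
  · exact hs.mem_uPref_of_mem_proposed (hs.mem_proposed_of_mem_hold hold)
  · exact mem_uPref_of_nextProposal_eq_some hnext

theorem step (hB : ∀ l, Function.Injective (mk.bRank l)) (hs : IsValidState mk s) :
    IsValidState mk (step mk s) where
  card_hold_le l := card_topQ_le (hB l) _
  mem_proposed_of_mem_hold h := hs.mem_step_proposed_of_mem_applicants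
    (mem_applicants_of_mem_step_hold h)
  mem_uPref_of_mem_proposed h := by
    rcases mem_step_proposed.mp h with old | new
    · exact hs.mem_uPref_of_mem_proposed old
    · exact mem_uPref_of_nextProposal_eq_some (mem_proposalsTo.mp new).2
  eq_of_mem_hold h h' := by
    rcases mem_applicants.mp (mem_applicants_of_mem_step_hold h) with hold | ⟨hm, hnext⟩ <;>
      rcases mem_applicants.mp (mem_applicants_of_mem_step_hold h') with hold' | ⟨hm', hnext'⟩
    · exact hs.eq_of_mem_hold hold hold'
    · exact absurd ⟨_, hold⟩ hm'
    · exact absurd ⟨_, hold'⟩ hm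
    · exact Option.some_inj.mp (hnext.symm.trans hnext')
  mem_proposed_of_uPrefers hpref h := by
    rcases mem_step_proposed.mp h with old | new
    · exact proposed_subset_step_proposed (hs.mem_proposed_of_uPrefers hpref old)
    · exact proposed_subset_step_proposed
        (mem_proposed_of_nextProposal_eq_some (mem_proposalsTo.mp new).2 hpref)

end IsValidState

theorem uPrefers_of_mem_applicants (hIR : IndivRational mk ν) (hs : IsValidState mk s)
    (hp : HoldsPartners ν s) (ha : m ∈ applicants mk s l) (hν : m ∈ ν l') (hne : l ≠ l') :
    mk.uPrefers m l l' := by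
  refine (uPrefers_or_uPrefers (hs.mem_uPref_of_mem_applicants ha) (hIR _ _ hν) hne).resolve_right
    fun hpref => ?_
  rcases mem_applicants.mp ha with hold | ⟨hm, hnext⟩
  · exact hne (hs.eq_of_mem_hold hold
      (hp hν (hs.mem_proposed_of_uPrefers hpref (hs.mem_proposed_of_mem_hold hold))))
  · exact hm ⟨l', hp hν (mem_proposed_of_nextProposal_eq_some hnext hpref)⟩

/-- If `l` rejected its partner `m`, it would hold `quota l` applicants ranked above `m`; one of
them, `y`, is not in `ν l`, and `(y, l)` blocks `ν`. -/
theorem HoldsPartners.step (hν : IsStable mk ν) (hs : IsValidState mk s)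
    (hp : HoldsPartners ν s) : HoldsPartners ν (step mk s) := by
  intro m l hm hl
  have ha : m ∈ applicants mk s l := by
    rcases mem_step_proposed.mp hl with old | new
    · exact subset_union_left (hp hm old)
    · exact subset_union_right new
  by_contra hrejected
  rw [step_hold] at hrejected
  obtain ⟨y, hya, hylt, hyν⟩ :=
    exists_better_notMem_of_notMem_topQ ha hrejected hm (hν.1.1 l)
  refine hν.2.2 y l
    ⟨hs.mem_uPref_of_mem_applicants hya, hyν, fun l' hy => ?_, .inr ⟨m, hm, hylt⟩⟩
  exact uPrefers_of_mem_applicants hν.2.1 hs hp hya hy fun h => hyν (h ▸ hy)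

theorem isValidState_run (hB : ∀ l, Function.Injective (mk.bRank l)) :
    ∀ n, IsValidState mk (run mk n)
  | 0 => by constructor <;> simp [run]
  | n + 1 => (isValidState_run hB n).step hB

theorem holdsPartners_run (hB : ∀ l, Function.Injective (mk.bRank l)) (hν : IsStable mk ν) :
    ∀ n, HoldsPartners ν (run mk n)
  | 0 => by simp [run]
  | n + 1 => HoldsPartners.step hν (isValidState_run hB n) (holdsPartners_run hB hν n)

theorem sum_card_proposed_lt_step (h : ¬ IsTerminal mk s) :
    ∑ m, #(s.proposed m) < ∑ m, #((step mk s).proposed m) := by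
  obtain ⟨m, hm, hnext⟩ := not_forall₂.mp h
  obtain ⟨l, hl⟩ := Option.ne_none_iff_exists'.mp hnext
  refine sum_lt_sum (fun _ _ => card_le_card proposed_subset_step_proposed) ⟨m, mem_univ m, ?_⟩
  rw [step_proposed_of_nextProposal_eq_some hm hl,
    card_insert_of_notMem (notMem_proposed_of_nextProposal_eq_some hl)]
  exact Nat.lt_succ_self _

/-- Every non-terminal round makes a new proposal, and there are at most `|M| * |L|` of them. -/
theorem exists_isTerminal_run [Fintype L] (mk : Market M L) : ∃ n, IsTerminal mk (run mk n) := by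
  by_contra! h
  have hgrow : ∀ n, n ≤ ∑ m, #((run mk n).proposed m) := by
    intro n
    induction n with
    | zero => exact Nat.zero_le _
    | succ n ih => exact ih.trans_lt (sum_card_proposed_lt_step (h n))
  have hbound : ∀ n, ∑ m, #((run mk n).proposed m) ≤ Fintype.card M * Fintype.card L := by
    intro n
    simpa using sum_le_card_nsmul univ _ _ fun m _ => card_le_univ ((run mk n).proposed m)
  have := (hgrow _).trans (hbound (Fintype.card M * Fintype.card L + 1))
  omega

/-- A surplus user `m ∈ s.hold l \ ν l` would block `ν`, as `l` has a free slot in `ν`. -/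
theorem card_hold_le_card (hν : IsStable mk ν) (hs : IsValidState mk s) (hp : HoldsPartners ν s)
    (l : L) : #(s.hold l) ≤ #(ν l) := by
  by_contra! hlt
  obtain ⟨m, hm, hmν⟩ := not_subset.mp fun hsub => (card_le_card hsub).not_gt hlt
  have ha : m ∈ applicants mk s l := subset_union_left hm
  refine hν.2.2 m l ⟨hs.mem_uPref_of_mem_applicants ha, hmν, fun l' hm' => ?_,
    .inl (hlt.trans_le (hs.card_hold_le l))⟩
  exact uPrefers_of_mem_applicants hν.2.1 hs hp ha hm' fun h => hmν (h ▸ hm')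

theorem card_hold_eq_and_matched_iff [Fintype L] (hν : IsStable mk ν) (hs : IsValidState mk s)
    (hp : HoldsPartners ν s) (hterm : IsTerminal mk s) :
    (∀ l, #(s.hold l) = #(ν l)) ∧ ∀ m, (∃ l, m ∈ ν l) ↔ matched s m := by
  have hdisj : ((univ : Finset L) : Set L).PairwiseDisjoint ν := fun l _ l' _ hne =>
    disjoint_left.mpr fun m hm hm' => hne (hν.1.2 m l l' hm hm')
  have hsub : univ.biUnion ν ⊆ univ.biUnion s.hold := fun m hm => by
    obtain ⟨l, -, hml⟩ := mem_biUnion.mp hm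
    obtain ⟨l', hml'⟩ := matched_of_mem hν.2.1 hp hterm hml
    exact mem_biUnion.mpr ⟨l', mem_univ l', hml'⟩
  obtain ⟨hcard, hunion⟩ := card_eq_and_biUnion_eq_of_biUnion_subset hdisj
    (fun l _ => card_hold_le_card hν hs hp l) hsub
  refine ⟨fun l => hcard l (mem_univ l), fun m => ?_⟩
  simpa [matched] using (congrArg (m ∈ ·) hunion).to_iff.symm

end Market

theorem rural_hospitals_general {M L : Type*} [Fintype M] [Fintype L] (mk : Market M L)
    (hB : ∀ l, Function.Injective (mk.bRank l))
    (μ μ' : L → Finset M)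
    (hμ : Market.IsStable mk μ) (hμ' : Market.IsStable mk μ') :
    (∀ l, (μ l).card = (μ' l).card) ∧
      ∀ m : M, (∃ l, m ∈ μ l) ↔ (∃ l, m ∈ μ' l) := by
  obtain ⟨n, hterm⟩ := Market.exists_isTerminal_run mk
  have outcome {ν : L → Finset M} (hν : Market.IsStable mk ν) :=
    Market.card_hold_eq_and_matched_iff hν (Market.isValidState_run hB n)
      (Market.holdsPartners_run hB hν n) hterm
  obtain ⟨hcard, hmatched⟩ := outcome hμ
  obtain ⟨hcard', hmatched'⟩ := outcome hμ'
  exact ⟨fun l => (hcard l).symm.trans (hcard' l),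
    fun m => (hmatched m).trans (hmatched' m).symm⟩

/-- rural hospitals theorem: In a finite many-to-one matching
market with strict preferences, any two stable matchings fill the same number
of positions at each BS and match exactly the same set of users. -/
theorem rural_hospitals {M L : Type*} [Fintype M] [Fintype L] (mk : Market M L)
    (hU : ∀ m, (mk.uPref m).Nodup) (hB : ∀ l, Function.Injective (mk.bRank l))
    (μ μ' : L → Finset M)
    (hμ : Market.IsStable mk μ) (hμ' : Market.IsStable mk μ') :
    (∀ l, (μ l).card = (μ' l).card) ∧
      ∀ m : M, (∃ l, m ∈ μ l) ↔ (∃ l, m ∈ μ' l) :=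
  rural_hospitals_general mk hB μ μ' hμ hμ'
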